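/- Let D be a graph database, A an automaton, and s, t two vertices of D. Let P_{s,t} be the set of walks w in D from s to t such that some word in lbl(w) is accepted by A. Then every walk of minimal length in P_{s,t} is the projection of a simple run in D×A (hence belongs to the simple-run semantics output ⟦A⟧_SR(D)). -/

import Mathlib

/-!
Lift a minimal matching walk, along an accepting computation on one of its label words, to a run
of `D × A` of the same length. If that run repeated a vertex of `V × Q`, cutting out the cycle
would leave a strictly shorter run, whose projection is a strictly shorter walk from `s` to `t`
matching `A`: a contradiction with minimality.
-/

structure GraphDB (σ V E : Type) where
  src : E → V
  tgt : E → V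
  lbl : E → Set σ

inductive GraphDB.IsWalkFrom {σ V E : Type} (D : GraphDB σ V E) : V → List E → V → Prop
  | nil (v : V) : D.IsWalkFrom v [] v
  | cons {v u t : V} {e : E} {es : List E} :
      D.src e = v → D.tgt e = u → D.IsWalkFrom u es t → D.IsWalkFrom v (e :: es) t

/-- The list of vertices visited by a walk starting at `s` with edge list `es`. -/
def GraphDB.walkVertices {σ V E : Type} (D : GraphDB σ V E) (s : V) (es : List E) : List V :=
  s :: es.map D.tgt

/-- `w` is one of the label words of the walk with edges `es`. -/
def GraphDB.WalkLabel {σ V E : Type} (D : GraphDB σ V E) (es : List E) (w : List σ) : Prop :=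
  List.Forall₂ (fun a e => a ∈ D.lbl e) w es

structure Auto (σ Q : Type) where
  Δ : Set (Q × σ × Q)
  I : Set Q
  F : Set Q

inductive Auto.IsComp {σ Q : Type} (A : Auto σ Q) : Q → List σ → Q → Prop
  | nil (q : Q) : A.IsComp q [] q
  | cons {q q' t : Q} {a : σ} {w : List σ} :
      (q, a, q') ∈ A.Δ → A.IsComp q' w t → A.IsComp q (a :: w) t

def Auto.Accepts {σ Q : Type} (A : Auto σ Q) (w : List σ) : Prop :=
  ∃ i ∈ A.I, ∃ f ∈ A.F, A.IsComp i w f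

/-- Edges of the product (run) database `D × A`. -/
def ProdEdge {σ V E Q : Type} (D : GraphDB σ V E) (A : Auto σ Q) : Type :=
  { p : E × (Q × σ × Q) // p.2 ∈ A.Δ ∧ p.2.2.1 ∈ D.lbl p.1 }

/-- The product (run) database `D × A`. -/
def prodDB {σ V E Q : Type} (D : GraphDB σ V E) (A : Auto σ Q) :
    GraphDB σ (V × Q) (ProdEdge D A) where
  src p := (D.src p.1.1, p.1.2.1)
  tgt p := (D.tgt p.1.1, p.1.2.2.2)
  lbl p := {p.1.2.2.1}

/-- A run: a walk of `D × A` from `V × I` to `V × F`. -/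
def IsRun {σ V E Q : Type} (D : GraphDB σ V E) (A : Auto σ Q)
    (p : V × Q) (es : List (ProdEdge D A)) (q : V × Q) : Prop :=
  (prodDB D A).IsWalkFrom p es q ∧ p.2 ∈ A.I ∧ q.2 ∈ A.F

/-- A walk is simple if it repeats no vertex. -/
def IsSimple {σ V E : Type} (D : GraphDB σ V E) (s : V) (es : List E) : Prop :=
  (D.walkVertices s es).Nodup

/-- Projection of product edges to edges of `D`. -/
def projEdges {σ V E Q : Type} {D : GraphDB σ V E} {A : Auto σ Q}
    (es : List (ProdEdge D A)) : List E := es.map (fun p => p.1.1)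

/-- Membership in the simple-run semantics `⟦A⟧_SR(D)`:
the walk `(s, es, t)` is the projection of some simple run of `D × A`. -/
def InSR {σ V E Q : Type} (D : GraphDB σ V E) (A : Auto σ Q)
    (s : V) (es : List E) (t : V) : Prop :=
  ∃ (i f : Q) (r : List (ProdEdge D A)),
    IsRun D A (s, i) r (t, f) ∧ IsSimple (prodDB D A) (s, i) r ∧ projEdges r = es

namespace GraphDB

variable {σ V E : Type} {D : GraphDB σ V E}

theorem IsWalkFrom.exists_of_mem_walkVertices {v t x : V} {es : List E}
    (hw : D.IsWalkFrom v es t) (hx : x ∈ D.walkVertices v es) :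
    ∃ es', D.IsWalkFrom x es' t ∧ es'.length ≤ es.length := by
  induction hw with
  | nil v =>
    obtain rfl : x = v := by simpa [walkVertices] using hx
    exact ⟨[], .nil x, le_rfl⟩
  | @cons v u t e es hsrc htgt hw ih =>
    rcases List.mem_cons.mp hx with rfl | hx
    · exact ⟨e :: es, .cons hsrc htgt hw, le_rfl⟩
    · obtain ⟨es', hw', hlen⟩ := ih (by simpa [walkVertices, htgt] using hx)
      exact ⟨es', hw', hlen.trans (Nat.le_succ _)⟩

theorem IsWalkFrom.exists_shorter_of_not_nodup {v t : V} {es : List E}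
    (hw : D.IsWalkFrom v es t) (hns : ¬ (D.walkVertices v es).Nodup) :
    ∃ es', D.IsWalkFrom v es' t ∧ es'.length < es.length := by
  induction hw with
  | nil v => simp [walkVertices] at hns
  | @cons v u t e es hsrc htgt hw ih =>
    have hvert : D.walkVertices v (e :: es) = v :: D.walkVertices u es := by
      simp [walkVertices, htgt]
    rw [hvert, List.nodup_cons, not_and_or, not_not] at hns
    rcases hns with hrepeat | hns
    · obtain ⟨es', hw', hlen⟩ := hw.exists_of_mem_walkVertices hrepeat
      exact ⟨es', hw', Nat.lt_succ_of_le hlen⟩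
    · obtain ⟨es', hw', hlen⟩ := ih hns
      exact ⟨e :: es', .cons hsrc htgt hw', Nat.succ_lt_succ hlen⟩

end GraphDB

section Product

variable {σ V E Q : Type} {D : GraphDB σ V E} {A : Auto σ Q}

@[simp]
theorem length_projEdges (r : List (ProdEdge D A)) : (projEdges r).length = r.length :=
  List.length_map _

theorem GraphDB.WalkLabel.exists_prodDB_walk {es : List E} {w : List σ}
    (hlbl : D.WalkLabel es w) {s t : V} {i f : Q}
    (hw : D.IsWalkFrom s es t) (hc : A.IsComp i w f) :
    ∃ r : List (ProdEdge D A), (prodDB D A).IsWalkFrom (s, i) r (t, f) ∧ projEdges r = es := by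
  induction hlbl generalizing s i with
  | nil =>
    cases hw; cases hc
    exact ⟨[], .nil _, rfl⟩
  | @cons a e w es ha _ ih =>
    obtain _ | ⟨hsrc, htgt, hw⟩ := hw
    obtain _ | ⟨hΔ, hc⟩ := hc
    obtain ⟨r, hr, hproj⟩ := ih hw hc
    refine ⟨⟨(e, (i, _, _)), hΔ, ha⟩ :: r, .cons ?_ ?_ hr, ?_⟩
    · simp [prodDB, hsrc]
    · simp [prodDB, htgt]
    · rw [← hproj]; rfl

theorem GraphDB.IsWalkFrom.projEdges_prodDB {p q : V × Q} {r : List (ProdEdge D A)}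
    (hr : (prodDB D A).IsWalkFrom p r q) :
    D.IsWalkFrom p.1 (projEdges r) q.1 ∧
      ∃ w, D.WalkLabel (projEdges r) w ∧ A.IsComp p.2 w q.2 := by
  induction hr with
  | nil v => exact ⟨.nil _, [], .nil, .nil _⟩
  | @cons v u t pe r hsrc htgt _ ih =>
    subst hsrc htgt
    obtain ⟨hw, w, hlbl, hc⟩ := ih
    exact ⟨.cons rfl rfl hw, pe.1.2.2.1 :: w, .cons pe.2.2 hlbl, .cons pe.2.1 hc⟩

end Product

/-- every walk of minimal length among the walks from `s` to `t`
matching `A` belongs to the simple-run semantics output. -/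
theorem stmt_2 {σ V E Q : Type} (D : GraphDB σ V E) (A : Auto σ Q)
    (s t : V) (es : List E)
    (hw : D.IsWalkFrom s es t)
    (hm : ∃ w : List σ, D.WalkLabel es w ∧ A.Accepts w)
    (hmin : ∀ es' : List E, D.IsWalkFrom s es' t →
      (∃ w : List σ, D.WalkLabel es' w ∧ A.Accepts w) → es.length ≤ es'.length) :
    InSR D A s es t := by
  obtain ⟨w, hlbl, i, hi, f, hf, hc⟩ := hm
  obtain ⟨r, hr, rfl⟩ := hlbl.exists_prodDB_walk hw hc
  refine ⟨i, f, r, ⟨hr, hi, hf⟩, ?_, rfl⟩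
  by_contra hns
  obtain ⟨r', hr', hshorter⟩ := hr.exists_shorter_of_not_nodup hns
  obtain ⟨hw', w', hlbl', hc'⟩ := hr'.projEdges_prodDB
  have hlonger := hmin (projEdges r') hw' ⟨w', hlbl', i, hi, f, hf, hc'⟩
  simp only [length_projEdges] at hlonger
  omega
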